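/- arXiv:1703.06852 — 6 statements merged into one kernel-verified Lean document; each statement's English description precedes it below -/
import Mathlib

section
/- Let 0 ≤ k ≤ n, let h ∈ GL_n(ℝ) with block decomposition h = [[h₁, h₂], [h₃, h₄]] (h₁ of size (n−k)×(n−k), h₄ of size k×k), and let h' := ᵗh⁻¹ with corresponding blocks h'₁, h'₂, h'₃, h'₄. Let ζ be a symmetric (n−k)×(n−k) real matrix and ξ a real (n−k)×k matrix. Assume h₄ − h₃·ξ and h'₁ + h'₂·ᵗξ are invertible, and set B := (−h₂ + h₁·ξ)·(h₄ − h₃·ξ)⁻¹ and C := (h'₃ + h'₄·ᵗξ)·(h'₁ + h'₂·ᵗξ)⁻¹. Then ᵗC = B, and (h₁ + B·h₃)·ζ·(h'₁ + h'₂·ᵗξ)⁻¹ = (h₁ + B·h₃)·ζ·ᵗ(h₁ + B·h₃); in particular the matrix A := (h₁ + B·h₃)·ζ·(h'₁ + h'₂·ᵗξ)⁻¹ is symmetric. -/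
open Matrix

theorem stmt4 (n k : ℕ) (hk : k ≤ n)
    (h₁ : Matrix (Fin (n - k)) (Fin (n - k)) ℝ) (h₂ : Matrix (Fin (n - k)) (Fin k) ℝ)
    (h₃ : Matrix (Fin k) (Fin (n - k)) ℝ) (h₄ : Matrix (Fin k) (Fin k) ℝ)
    (hinv : IsUnit (Matrix.fromBlocks h₁ h₂ h₃ h₄))
    (ζ : Matrix (Fin (n - k)) (Fin (n - k)) ℝ) (hζ : ζ.IsSymm)
    (ξ : Matrix (Fin (n - k)) (Fin k) ℝ)
    (h'₁ : Matrix (Fin (n - k)) (Fin (n - k)) ℝ) (h'₂ : Matrix (Fin (n - k)) (Fin k) ℝ)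
    (h'₃ : Matrix (Fin k) (Fin (n - k)) ℝ) (h'₄ : Matrix (Fin k) (Fin k) ℝ)
    (h'def : Matrix.fromBlocks h'₁ h'₂ h'₃ h'₄ = ((Matrix.fromBlocks h₁ h₂ h₃ h₄)⁻¹)ᵀ)
    (hu1 : IsUnit (h₄ - h₃ * ξ)) (hu2 : IsUnit (h'₁ + h'₂ * ξᵀ))
    (B : Matrix (Fin (n - k)) (Fin k) ℝ)
    (hB : B = (-h₂ + h₁ * ξ) * (h₄ - h₃ * ξ)⁻¹)
    (C : Matrix (Fin k) (Fin (n - k)) ℝ)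
    (hC : C = (h'₃ + h'₄ * ξᵀ) * (h'₁ + h'₂ * ξᵀ)⁻¹) :
    Cᵀ = B ∧
    (h₁ + B * h₃) * ζ * (h'₁ + h'₂ * ξᵀ)⁻¹ = (h₁ + B * h₃) * ζ * (h₁ + B * h₃)ᵀ ∧
    ((h₁ + B * h₃) * ζ * (h'₁ + h'₂ * ξᵀ)⁻¹).IsSymm := by

  have hdet : IsUnit (Matrix.fromBlocks h₁ h₂ h₃ h₄).det :=
    (Matrix.isUnit_iff_isUnit_det _).mp hinv
  have hu1d : IsUnit (h₄ - h₃ * ξ).det := (Matrix.isUnit_iff_isUnit_det _).mp hu1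
  have hu2d : IsUnit (h'₁ + h'₂ * ξᵀ).det := (Matrix.isUnit_iff_isUnit_det _).mp hu2
  have hu1td : IsUnit ((h₄ - h₃ * ξ)ᵀ).det := by rwa [Matrix.det_transpose]
  have hA : (Matrix.fromBlocks h₁ h₂ h₃ h₄)ᵀ * Matrix.fromBlocks h'₁ h'₂ h'₃ h'₄ = 1 := by
    rw [h'def, ← transpose_mul, Matrix.nonsing_inv_mul _ hdet, transpose_one]
  rw [Matrix.fromBlocks_transpose, Matrix.fromBlocks_multiply, ← Matrix.fromBlocks_one] at hA
  obtain ⟨A1, A2, A3, A4⟩ := Matrix.fromBlocks_inj.mp hA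
  have e1 : h₄ᵀ * h'₃ = -(h₂ᵀ * h'₁) := eq_neg_of_add_eq_zero_right A3
  have e2 : h₄ᵀ * h'₄ = 1 - h₂ᵀ * h'₂ := by rw [eq_sub_iff_add_eq, add_comm]; exact A4
  have e3 : h₃ᵀ * h'₃ = 1 - h₁ᵀ * h'₁ := by rw [eq_sub_iff_add_eq, add_comm]; exact A1
  have e4 : h₃ᵀ * h'₄ = -(h₁ᵀ * h'₂) := eq_neg_of_add_eq_zero_right A2
  have e2' : h₄ᵀ * (h'₄ * ξᵀ) = ξᵀ - h₂ᵀ * (h'₂ * ξᵀ) := by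
    rw [← Matrix.mul_assoc, e2, Matrix.sub_mul, Matrix.one_mul, Matrix.mul_assoc]
  have e3' : ξᵀ * (h₃ᵀ * h'₃) = ξᵀ - ξᵀ * (h₁ᵀ * h'₁) := by
    rw [e3, Matrix.mul_sub, Matrix.mul_one]
  have e4' : ξᵀ * (h₃ᵀ * (h'₄ * ξᵀ)) = -(ξᵀ * (h₁ᵀ * (h'₂ * ξᵀ))) := by
    rw [← Matrix.mul_assoc h₃ᵀ, e4, Matrix.neg_mul, Matrix.mul_neg, Matrix.mul_assoc]
  have K1 : (h₄ - h₃ * ξ)ᵀ * (h'₃ + h'₄ * ξᵀ) = (-h₂ + h₁ * ξ)ᵀ * (h'₁ + h'₂ * ξᵀ) := by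
    simp only [transpose_sub, transpose_add, transpose_mul, transpose_neg,
      Matrix.sub_mul, Matrix.add_mul, Matrix.neg_mul, Matrix.mul_add, Matrix.mul_sub,
      Matrix.mul_assoc]
    rw [e1, e2', e3', e4']
    abel
  have hCB : C = Bᵀ := by
    rw [hC, hB, transpose_mul, Matrix.transpose_nonsing_inv]
    have step : h'₃ + h'₄ * ξᵀ =
        ((h₄ - h₃ * ξ)ᵀ)⁻¹ * ((-h₂ + h₁ * ξ)ᵀ * (h'₁ + h'₂ * ξᵀ)) := by
      rw [← K1, Matrix.nonsing_inv_mul_cancel_left _ _ hu1td]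
    rw [step, Matrix.mul_assoc, Matrix.mul_nonsing_inv_cancel_right _ _ hu2d]
  have hCmul : C * (h'₁ + h'₂ * ξᵀ) = h'₃ + h'₄ * ξᵀ := by
    rw [hC, Matrix.nonsing_inv_mul_cancel_right _ _ hu2d]
  have f1 : h₃ᵀ * (h'₄ * ξᵀ) = -(h₁ᵀ * (h'₂ * ξᵀ)) := by
    rw [← Matrix.mul_assoc, e4, Matrix.neg_mul, Matrix.mul_assoc]
  have hinvT : (h'₁ + h'₂ * ξᵀ)⁻¹ = (h₁ + B * h₃)ᵀ := by
    apply Matrix.inv_eq_left_inv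
    rw [transpose_add, transpose_mul, ← hCB, Matrix.add_mul, Matrix.mul_assoc, hCmul,
      Matrix.mul_add, Matrix.mul_add, e3, f1]
    abel
  have goal2 : (h₁ + B * h₃) * ζ * (h'₁ + h'₂ * ξᵀ)⁻¹
      = (h₁ + B * h₃) * ζ * (h₁ + B * h₃)ᵀ := by rw [hinvT]
  refine ⟨by rw [hCB, transpose_transpose], goal2, ?_⟩
  rw [goal2, Matrix.IsSymm, transpose_mul, transpose_mul, transpose_transpose, hζ.eq,
    Matrix.mul_assoc]
end

section
/- Let 0 ≤ k ≤ n and r, s ≥ 0 with r + s ≤ n − k, and let ζ = diag(1_r, −1_s, 0_{n−k−r−s}) be the symmetric (n−k)×(n−k) matrix with r entries +1, s entries −1 and the rest 0 on the diagonal. Let V^{(k;r,s)} ⊆ ℝ^{2n} be the linear subspace {(−ζ·v₁, v₂, v₁, 0) : v₁ ∈ ℝ^{n−k}, v₂ ∈ ℝ^k} (coordinates written in blocks of sizes n−k, k, n−k, k). Then for h ∈ GL_n(ℝ) with block decomposition h = [[h₁, h₂], [h₃, h₄]] (h₁ of size (n−k)×(n−k)), the element ι(h) maps V^{(k;r,s)}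 onto itself if and only if h₂ = 0 and h₁·ζ·ᵗh₁ = ζ. -/
open Matrix

/-- `ζ = diag(1_r, -1_s, 0)` as an `m × m` matrix. -/
def zetaMat (m r s : ℕ) : Matrix (Fin m) (Fin m) ℝ :=
  Matrix.diagonal fun i => if (i : ℕ) < r then 1 else if (i : ℕ) < r + s then -1 else 0

/-- The subspace `V^{(k;r,s)} = {(-ζ·v₁, v₂, v₁, 0)}` of `ℝ^{2n}`, with coordinates written
in blocks of sizes `n-k, k, n-k, k`. -/
def Vset (n k r s : ℕ) : Set ((Fin (n - k) ⊕ Fin k) ⊕ (Fin (n - k) ⊕ Fin k) → ℝ) :=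
  {u | ∃ (v₁ : Fin (n - k) → ℝ) (v₂ : Fin k → ℝ),
    u = Sum.elim (Sum.elim (-((zetaMat (n - k) r s).mulVec v₁)) v₂) (Sum.elim v₁ 0)}

private lemma mulVec_cancel_l {m : Type*} [Fintype m] [DecidableEq m] {A : Matrix m m ℝ}
    (h : IsUnit A.det) (x : m → ℝ) : A⁻¹ *ᵥ (A *ᵥ x) = x := by
  rw [mulVec_mulVec, nonsing_inv_mul A h, one_mulVec]

private lemma mulVec_cancel_r {m : Type*} [Fintype m] [DecidableEq m] {A : Matrix m m ℝ}
    (h : IsUnit A.det) (x : m → ℝ) : A *ᵥ (A⁻¹ *ᵥ x) = x := by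
  rw [mulVec_mulVec, mul_nonsing_inv A h, one_mulVec]

private lemma matrix_ext_mulVec {m p : Type*} [Fintype p] [DecidableEq p]
    {A B : Matrix m p ℝ} (h : ∀ x, A *ᵥ x = B *ᵥ x) : A = B := by
  ext i j
  have := congrFun (h (Pi.single j 1)) i
  simpa using this

private lemma blockDiag_mulVec {a b : Type*} [Fintype a] [Fintype b]
    (H : Matrix a a ℝ) (G : Matrix b b ℝ) (x : a → ℝ) (y : b → ℝ) :
    (fromBlocks H 0 0 G) *ᵥ Sum.elim x y = Sum.elim (H *ᵥ x) (G *ᵥ y) := by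
  rw [fromBlocks_mulVec]; simp

theorem stmt5 (n k r s : ℕ) (hk : k ≤ n) (hrs : r + s ≤ n - k)
    (h₁ : Matrix (Fin (n - k)) (Fin (n - k)) ℝ) (h₂ : Matrix (Fin (n - k)) (Fin k) ℝ)
    (h₃ : Matrix (Fin k) (Fin (n - k)) ℝ) (h₄ : Matrix (Fin k) (Fin k) ℝ)
    (hinv : IsUnit (Matrix.fromBlocks h₁ h₂ h₃ h₄)) :
    ((fun u => (Matrix.fromBlocks (Matrix.fromBlocks h₁ h₂ h₃ h₄) 0 0
        (((Matrix.fromBlocks h₁ h₂ h₃ h₄)ᵀ)⁻¹)).mulVec u) '' Vset n k r s = Vset n k r s) ↔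
      (h₂ = 0 ∧ h₁ * zetaMat (n - k) r s * h₁ᵀ = zetaMat (n - k) r s) := by
  have hdetH : IsUnit (Matrix.fromBlocks h₁ h₂ h₃ h₄).det :=
    (Matrix.isUnit_iff_isUnit_det _).mp hinv
  set ζ := zetaMat (n - k) r s with hζdef
  constructor
  · intro himg
    have hsub : ∀ u ∈ Vset n k r s,
        (fromBlocks (fromBlocks h₁ h₂ h₃ h₄) 0 0 ((fromBlocks h₁ h₂ h₃ h₄)ᵀ)⁻¹) *ᵥ u
          ∈ Vset n k r s := by
      intro u hu
      rw [← himg]; exact ⟨u, hu, rfl⟩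
    -- step 1: h₂ = 0
    have h2z : h₂ = 0 := by
      apply matrix_ext_mulVec (fun v₂ => ?_)
      have hu : Sum.elim (Sum.elim (-(ζ *ᵥ (0 : Fin (n-k) → ℝ))) v₂)
          (Sum.elim (0 : Fin (n-k) → ℝ) 0) ∈ Vset n k r s := ⟨0, v₂, rfl⟩
      obtain ⟨w₁, w₂, e⟩ := hsub _ hu
      rw [blockDiag_mulVec] at e
      have e0 : (Sum.elim (0 : Fin (n-k) → ℝ) (0 : Fin k → ℝ)) = 0 := by
        funext i; cases i <;> rfl
      rw [e0, mulVec_zero, mulVec_zero, neg_zero, fromBlocks_mulVec] at e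
      simp only [Sum.elim_comp_inl, Sum.elim_comp_inr, mulVec_zero, zero_add] at e
      have hw₁ : w₁ = 0 := by
        funext i
        have := congrFun e (Sum.inr (Sum.inl i))
        simpa using this.symm
      funext i
      have := congrFun e (Sum.inl (Sum.inl i))
      simp only [Sum.elim_inl, hw₁, mulVec_zero, neg_zero] at this
      simpa using this
    subst h2z
    -- determinants of the diagonal blocks
    have hdet : IsUnit h₁.det ∧ IsUnit h₄.det := by
      rw [Matrix.det_fromBlocks_zero₁₂] at hdetH
      exact IsUnit.mul_iff.mp hdetH
    have hdet1T : IsUnit h₁ᵀ.det := by rw [Matrix.det_transpose]; exact hdet.1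
    have hdetHT : IsUnit ((fromBlocks h₁ 0 h₃ h₄)ᵀ).det := by rwa [Matrix.det_transpose]
    refine ⟨rfl, matrix_ext_mulVec (fun a => ?_)⟩
    set v₁ := h₁ᵀ *ᵥ a with hv₁
    have hu : Sum.elim (Sum.elim (-(ζ *ᵥ v₁)) (0 : Fin k → ℝ)) (Sum.elim v₁ 0)
        ∈ Vset n k r s := ⟨v₁, 0, rfl⟩
    obtain ⟨w₁, w₂, e⟩ := hsub _ hu
    rw [blockDiag_mulVec] at e
    have eR : ((fromBlocks h₁ 0 h₃ h₄)ᵀ)⁻¹ *ᵥ Sum.elim v₁ 0 = Sum.elim w₁ 0 := by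
      funext i
      exact congrFun e (Sum.inr i)
    have eRT : Sum.elim v₁ (0 : Fin k → ℝ) = (fromBlocks h₁ 0 h₃ h₄)ᵀ *ᵥ Sum.elim w₁ 0 := by
      rw [← eR, mulVec_cancel_r hdetHT]
    rw [fromBlocks_transpose, transpose_zero, fromBlocks_mulVec] at eRT
    simp only [Sum.elim_comp_inl, Sum.elim_comp_inr, mulVec_zero, add_zero,
      zero_mulVec, zero_add] at eRT
    have hw : h₁ᵀ *ᵥ w₁ = v₁ := by
      funext i; exact (congrFun eRT (Sum.inl i)).symm
    have hw₁a : w₁ = a := by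
      have := congrArg (fun z => (h₁ᵀ)⁻¹ *ᵥ z) hw
      simpa [hv₁, mulVec_cancel_l hdet1T] using this
    have eL : (fromBlocks h₁ 0 h₃ h₄) *ᵥ Sum.elim (-(ζ *ᵥ v₁)) (0 : Fin k → ℝ)
        = Sum.elim (-(ζ *ᵥ w₁)) w₂ := by
      funext i; exact congrFun e (Sum.inl i)
    rw [fromBlocks_mulVec] at eL
    simp only [Sum.elim_comp_inl, Sum.elim_comp_inr, mulVec_zero, zero_mulVec, add_zero,
      mulVec_neg] at eL
    have key : h₁ *ᵥ (ζ *ᵥ v₁) = ζ *ᵥ a := by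
      funext i
      have h' := congrFun eL (Sum.inl i)
      simp only [Sum.elim_inl, hw₁a] at h'
      have : -(h₁ *ᵥ (ζ *ᵥ v₁)) i = -(ζ *ᵥ a) i := h'
      simpa using this
    rw [hv₁, mulVec_mulVec, mulVec_mulVec] at key
    exact key
  · rintro ⟨h2z, hζc⟩
    subst h2z
    have hdet : IsUnit h₁.det ∧ IsUnit h₄.det := by
      rw [Matrix.det_fromBlocks_zero₁₂] at hdetH
      exact IsUnit.mul_iff.mp hdetH
    have hdet4 : IsUnit h₄.det := hdet.2
    have hdet1T : IsUnit h₁ᵀ.det := by rw [Matrix.det_transpose]; exact hdet.1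
    have hdetHT : IsUnit ((fromBlocks h₁ 0 h₃ h₄)ᵀ).det := by rwa [Matrix.det_transpose]
    have key : h₁ * ζ = ζ * (h₁ᵀ)⁻¹ := by
      calc h₁ * ζ = h₁ * ζ * h₁ᵀ * (h₁ᵀ)⁻¹ := (mul_nonsing_inv_cancel_right _ _ hdet1T).symm
        _ = ζ * (h₁ᵀ)⁻¹ := by rw [hζc]
    -- inverse of Hᵀ on vectors of the form (v₁, 0)
    have hinvvec : ∀ v₁ : Fin (n-k) → ℝ,
        ((fromBlocks h₁ 0 h₃ h₄)ᵀ)⁻¹ *ᵥ Sum.elim (h₁ᵀ *ᵥ v₁) 0 = Sum.elim v₁ 0 := by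
      intro v₁
      have : (fromBlocks h₁ 0 h₃ h₄)ᵀ *ᵥ Sum.elim v₁ 0 = Sum.elim (h₁ᵀ *ᵥ v₁) 0 := by
        rw [fromBlocks_transpose, transpose_zero, fromBlocks_mulVec]
        simp
      rw [← this, mulVec_cancel_l hdetHT]
    apply Set.eq_of_subset_of_subset
    · rintro _ ⟨u, ⟨v₁, v₂, rfl⟩, rfl⟩
      refine ⟨(h₁ᵀ)⁻¹ *ᵥ v₁, h₃ *ᵥ (-(ζ *ᵥ v₁)) + h₄ *ᵥ v₂, ?_⟩
      have d1 : h₁ *ᵥ (ζ *ᵥ v₁) = ζ *ᵥ ((h₁ᵀ)⁻¹ *ᵥ v₁) := by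
        rw [mulVec_mulVec, mulVec_mulVec, key]
      have d2 : ((fromBlocks h₁ 0 h₃ h₄)ᵀ)⁻¹ *ᵥ Sum.elim v₁ 0
          = Sum.elim ((h₁ᵀ)⁻¹ *ᵥ v₁) 0 := by
        conv_lhs => rw [show v₁ = h₁ᵀ *ᵥ ((h₁ᵀ)⁻¹ *ᵥ v₁) from (mulVec_cancel_r hdet1T v₁).symm]
        exact hinvvec _
      simp only [blockDiag_mulVec, fromBlocks_mulVec, Sum.elim_comp_inl, Sum.elim_comp_inr,
        zero_mulVec, add_zero, zero_add, mulVec_neg, d1, d2, ← hζdef]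
    · rintro _ ⟨v₁, v₂, rfl⟩
      refine ⟨Sum.elim (Sum.elim (-(ζ *ᵥ (h₁ᵀ *ᵥ v₁))) (h₄⁻¹ *ᵥ (v₂ + h₃ *ᵥ (ζ *ᵥ (h₁ᵀ *ᵥ v₁)))))
        (Sum.elim (h₁ᵀ *ᵥ v₁) 0), ⟨h₁ᵀ *ᵥ v₁, _, rfl⟩, ?_⟩
      have c1 : h₁ *ᵥ (ζ *ᵥ (h₁ᵀ *ᵥ v₁)) = ζ *ᵥ v₁ := by
        rw [mulVec_mulVec, mulVec_mulVec, hζc]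
      have c2 : -(h₃ *ᵥ (ζ *ᵥ (h₁ᵀ *ᵥ v₁))) + h₄ *ᵥ (h₄⁻¹ *ᵥ (v₂ + h₃ *ᵥ (ζ *ᵥ (h₁ᵀ *ᵥ v₁))))
          = v₂ := by
        rw [mulVec_cancel_r hdet4]; abel
      simp only [blockDiag_mulVec, fromBlocks_mulVec, Sum.elim_comp_inl, Sum.elim_comp_inr,
        zero_mulVec, add_zero, zero_add, hinvvec, c1, c2, mulVec_neg, ← hζdef]
end

section
/- Fix 1 ≤ d ≤ n. Let z, z' be invertible symmetric real n×n matrices and y, y' ∈ M_{n,d}(ℝ) be such that ᵗy·z⁻¹·y and ᵗy'·z'⁻¹·y' are invertible. Then the following are equivalent: (i) there exist h ∈ GL_n(ℝ) and m ∈ GL_d(ℝ) with h·z·ᵗh = z' and h·y·ᵗm = y'; (ii) there exists g ∈ GL_n(ℝ) with g·z·ᵗg = z' and there exists c ∈ GL_d(ℝ) with c·(ᵗy·z⁻¹·y)·ᵗc = ᵗy'·z'⁻¹·y'. Consequently, the pairs (z, y) with fixed signature (p,q) of z and fixed signature (s,t) of ᵗy·z⁻¹·y (with s + t = d) form a single orbit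 of GL_n(ℝ) × GL_d(ℝ) acting on Sym_n(ℝ) × M_{n,d}(ℝ) by (h,m)·(z,y) = (h·z·ᵗh, h·y·ᵗm). -/
/-!
The conditions are necessary since `(h y mᵀ)ᵀ (h z hᵀ)⁻¹ (h y mᵀ) = m (yᵀ z⁻¹ y) mᵀ`.
Conversely, write `b = yᵀ z⁻¹ y`. As `b` is invertible, the columns of `y` together with a basis
`Q` of their `z⁻¹`-orthogonal complement form an invertible matrix `T = [y Q]` with
`Tᵀ z⁻¹ T = diag(b, r)`; hence `h = T⁻¹` moves `(z, y)` to the normal form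
`(diag(b⁻¹, s), [1; 0])` with `s = r⁻¹`. Do the same for `(z', y')`. Since `z ≅ z'` and
`b⁻¹ ≅ b'⁻¹`, Witt cancellation gives `s ≅ s'`: over `ℝ` it follows from Sylvester's law of
inertia after diagonalising every block to `±1`. A block-diagonal matrix `diag(p, f)` realising
`b⁻¹ ≅ b'⁻¹` and `s ≅ s'` then moves one normal form to the other.
-/

open Matrix

namespace Matrix

lemma IsSymm.transpose_mul_mul {ι κ R : Type*} [Fintype ι] [CommRing R] {z : Matrix ι ι R}
    (hz : z.IsSymm) (y : Matrix ι κ R) :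
    (yᵀ * z * y).IsSymm := by
  simp [IsSymm, transpose_mul, hz.eq, Matrix.mul_assoc]

section CommRing

variable {ι κ ν R : Type*} [Fintype ι] [DecidableEq ι] [Fintype κ] [DecidableEq κ]
  [Fintype ν] [DecidableEq ν] [CommRing R]

def Congruent (a b : Matrix ι ι R) : Prop :=
  ∃ g : Matrix ι ι R, IsUnit g ∧ g * a * gᵀ = b

def PairCongruent (z : Matrix ι ι R) (y : Matrix ι κ R) (z' : Matrix ι ι R) (y' : Matrix ι κ R) :
    Prop :=
  ∃ (h : Matrix ι ι R) (m : Matrix κ κ R),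
    IsUnit h ∧ IsUnit m ∧ h * z * hᵀ = z' ∧ h * y * mᵀ = y'

lemma nonsing_inv_mul_mul_transpose_nonsing_inv {h : Matrix ι ι R} {m : Matrix κ κ R}
    (hh : IsUnit h) (hm : IsUnit m) (a : Matrix ι κ R) : h⁻¹ * (h * a * mᵀ) * m⁻¹ᵀ = a := by
  rw [transpose_nonsing_inv, Matrix.mul_assoc,
    mul_nonsing_inv_cancel_right _ _ ((isUnit_iff_isUnit_det _).1 ((isUnit_transpose m).2 hm)),
    nonsing_inv_mul_cancel_left _ _ ((isUnit_iff_isUnit_det _).1 hh)]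

namespace Congruent

lemma symm {a b : Matrix ι ι R} : Congruent a b → Congruent b a := by
  rintro ⟨g, hg, rfl⟩
  exact ⟨g⁻¹, isUnit_nonsing_inv_iff.2 hg, nonsing_inv_mul_mul_transpose_nonsing_inv hg hg a⟩

lemma trans {a b c : Matrix ι ι R} : Congruent a b → Congruent b c → Congruent a c := by
  rintro ⟨g, hg, rfl⟩ ⟨g', hg', rfl⟩
  exact ⟨g' * g, hg'.mul hg, by simp only [transpose_mul, Matrix.mul_assoc]⟩

lemma inv {a b : Matrix ι ι R} : Congruent a b → Congruent a⁻¹ b⁻¹ := by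
  rintro ⟨g, hg, rfl⟩
  refine ⟨g⁻¹ᵀ, (isUnit_transpose _).2 (isUnit_nonsing_inv_iff.2 hg), ?_⟩
  rw [Matrix.mul_inv_rev, Matrix.mul_inv_rev, transpose_transpose, transpose_nonsing_inv,
    Matrix.mul_assoc]

lemma submatrix {a b : Matrix ι ι R} (h : Congruent a b) (e : κ ≃ ι) :
    Congruent (a.submatrix e e) (b.submatrix e e) := by
  obtain ⟨g, hg, rfl⟩ := h
  refine ⟨g.submatrix e e, (isUnit_submatrix_equiv e e).2 hg, ?_⟩
  rw [transpose_submatrix, submatrix_mul_equiv, submatrix_mul_equiv]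

lemma fromBlocks {a a' : Matrix ι ι R} {s s' : Matrix κ κ R} (ha : Congruent a a')
    (hs : Congruent s s') : Congruent (fromBlocks a 0 0 s) (fromBlocks a' 0 0 s') := by
  obtain ⟨p, hp, rfl⟩ := ha
  obtain ⟨f, hf, rfl⟩ := hs
  refine ⟨Matrix.fromBlocks p 0 0 f, isUnit_fromBlocks_zero₂₁.2 ⟨hp, hf⟩, ?_⟩
  simp [fromBlocks_transpose, fromBlocks_multiply]

lemma equivalent_weightedSumSquares {v w : ι → R} (h : Congruent (diagonal v) (diagonal w)) :
    QuadraticMap.Equivalent (QuadraticMap.weightedSumSquares R w)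
      (QuadraticMap.weightedSumSquares R v) := by
  obtain ⟨g, hg, hgw⟩ := h
  refine ⟨{ toLinearEquiv := toLinearEquiv' gᵀ ((isUnit_transpose g).2 hg).invertible,
            map_app' := fun x => ?_ }⟩
  have hdiag (u x : ι → R) :
      QuadraticMap.weightedSumSquares R u x = x ⬝ᵥ (diagonal u *ᵥ x) := by
    simp [dotProduct, mulVec_diagonal, mul_left_comm]
  change QuadraticMap.weightedSumSquares R v (gᵀ *ᵥ x) = _
  rw [hdiag, hdiag, ← hgw, ← mulVec_mulVec, ← mulVec_mulVec, dotProduct_mulVec _ g,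
    ← mulVec_transpose]

end Congruent

lemma congruent_submatrix_perm (a : Matrix ι ι R) (σ : Equiv.Perm ι) :
    Congruent a (a.submatrix σ σ) := by
  refine ⟨σ.permMatrix R, ?_, ?_⟩
  · rw [isUnit_iff_isUnit_det, det_permutation]
    simpa using (Equiv.Perm.sign σ).isUnit.map (Int.castRingHom R)
  · rw [transpose_permMatrix, PEquiv.toMatrix_toPEquiv_mul, Equiv.Perm.permMatrix,
      PEquiv.mul_toMatrix_toPEquiv]
    rfl

namespace PairCongruent

lemma symm {z z' : Matrix ι ι R} {y y' : Matrix ι κ R} :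
    PairCongruent z y z' y' → PairCongruent z' y' z y := by
  rintro ⟨h, m, hh, hm, rfl, rfl⟩
  exact ⟨h⁻¹, m⁻¹, isUnit_nonsing_inv_iff.2 hh, isUnit_nonsing_inv_iff.2 hm,
    nonsing_inv_mul_mul_transpose_nonsing_inv hh hh z,
    nonsing_inv_mul_mul_transpose_nonsing_inv hh hm y⟩

lemma trans {z z' z'' : Matrix ι ι R} {y y' y'' : Matrix ι κ R} :
    PairCongruent z y z' y' → PairCongruent z' y' z'' y'' → PairCongruent z y z'' y'' := by
  rintro ⟨h, m, hh, hm, rfl, rfl⟩ ⟨h', m', hh', hm', rfl, rfl⟩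
  exact ⟨h' * h, m' * m, hh'.mul hh, hm'.mul hm, by simp only [transpose_mul, Matrix.mul_assoc],
    by simp only [transpose_mul, Matrix.mul_assoc]⟩

lemma congruent {z z' : Matrix ι ι R} {y y' : Matrix ι κ R} (h : PairCongruent z y z' y') :
    Congruent z z' :=
  let ⟨h, _, hh, _, hz, _⟩ := h
  ⟨h, hh, hz⟩

lemma congruent_transpose_mul_inv_mul {z z' : Matrix ι ι R} {y y' : Matrix ι κ R}
    (h : PairCongruent z y z' y') : Congruent (yᵀ * z⁻¹ * y) (y'ᵀ * z'⁻¹ * y') := by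
  obtain ⟨h, m, hh, hm, rfl, rfl⟩ := h
  refine ⟨m, hm, ?_⟩
  rw [Matrix.mul_inv_rev, Matrix.mul_inv_rev, transpose_mul, transpose_mul, transpose_transpose]
  simp only [Matrix.mul_assoc]
  rw [mul_nonsing_inv_cancel_left _ _ ((isUnit_iff_isUnit_det _).1 ((isUnit_transpose h).2 hh)),
    nonsing_inv_mul_cancel_left _ _ ((isUnit_iff_isUnit_det _).1 hh)]

end PairCongruent

lemma pairCongruent_fromBlocks (e : ι ≃ κ ⊕ ν) {a a' : Matrix κ κ R} {s s' : Matrix ν ν R}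
    (ha : Congruent a a') (hs : Congruent s s') :
    PairCongruent ((fromBlocks a 0 0 s).submatrix e e)
      ((fromRows 1 0 : Matrix (κ ⊕ ν) κ R).submatrix e id)
      ((fromBlocks a' 0 0 s').submatrix e e)
      ((fromRows 1 0 : Matrix (κ ⊕ ν) κ R).submatrix e id) := by
  obtain ⟨p, hp, rfl⟩ := ha
  obtain ⟨f, hf, rfl⟩ := hs
  refine ⟨(Matrix.fromBlocks p 0 0 f).submatrix e e, p⁻¹ᵀ,
    (isUnit_submatrix_equiv e e).2 (isUnit_fromBlocks_zero₂₁.2 ⟨hp, hf⟩),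
    (isUnit_transpose _).2 (isUnit_nonsing_inv_iff.2 hp), ?_, ?_⟩
  · rw [transpose_submatrix, submatrix_mul_equiv, submatrix_mul_equiv, fromBlocks_transpose]
    simp [fromBlocks_multiply]
  · rw [submatrix_mul_equiv, transpose_transpose, ← submatrix_id_id p⁻¹,
      ← submatrix_mul _ _ _ _ _ Function.bijective_id, fromBlocks_mul_fromRows, fromRows_mul]
    simp [mul_nonsing_inv _ ((isUnit_iff_isUnit_det p).1 hp)]

end CommRing

section Field

variable {ι κ ν K : Type*} [Fintype ι] [DecidableEq ι] [Fintype κ] [DecidableEq κ]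
  [Fintype ν] [DecidableEq ν] [Field K]

lemma exists_mul_eq_zero_isUnit_fromCols (e : ι ≃ κ ⊕ ν) {A : Matrix κ ι K} {y : Matrix ι κ K}
    (hAy : IsUnit (A * y)) :
    ∃ Q : Matrix ι ν K, A * Q = 0 ∧ IsUnit ((fromCols y Q).submatrix id e) := by
  have hsurj : Function.Surjective A.mulVecLin := fun x =>
    ⟨y *ᵥ ((A * y)⁻¹ *ᵥ x), by
      rw [mulVecLin_apply, mulVec_mulVec, mulVec_mulVec,
        mul_nonsing_inv _ ((isUnit_iff_isUnit_det _).1 hAy), one_mulVec]⟩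
  have hker : Module.finrank K (ν → K) = Module.finrank K (LinearMap.ker A.mulVecLin) := by
    have := LinearMap.finrank_range_add_finrank_ker A.mulVecLin
    rw [LinearMap.range_eq_top.2 hsurj, finrank_top] at this
    simp only [Module.finrank_fintype_fun_eq_card, Fintype.card_congr e, Fintype.card_sum] at this ⊢
    omega
  let φ := (LinearMap.ker A.mulVecLin).subtype ∘ₗ (LinearEquiv.ofFinrankEq _ _ hker).toLinearMap
  have hφ : Function.Injective φ := Subtype.val_injective.comp (LinearEquiv.injective _)
  set Q := LinearMap.toMatrix' φ with hQ
  have hAQ : A * Q = 0 := by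
    apply toLin'.injective
    rw [toLin'_mul, toLin'_toMatrix', map_zero, ← LinearMap.comp_assoc, toLin'_apply',
      LinearMap.comp_ker_subtype, LinearMap.zero_comp]
  refine ⟨Q, hAQ, ?_⟩
  rw [← mulVec_injective_iff_isUnit, ← coe_mulVecLin, ← LinearMap.ker_eq_bot,
    LinearMap.ker_eq_bot']
  intro v hv
  rw [mulVecLin_apply, submatrix_mulVec_equiv, fromCols_mulVec, Function.comp_id] at hv
  set u := v ∘ e.symm
  have hu₁ : u ∘ Sum.inl = 0 := by
    have := congrArg (A *ᵥ ·) hv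
    simp only [mulVec_add, mulVec_mulVec, hAQ, zero_mulVec, add_zero, mulVec_zero] at this
    exact (mulVec_injective_iff_isUnit.2 hAy) (this.trans (mulVec_zero _).symm)
  have hu₂ : u ∘ Sum.inr = 0 := by
    rw [hu₁, mulVec_zero, zero_add, hQ, LinearMap.toMatrix'_mulVec] at hv
    exact hφ (hv.trans φ.map_zero.symm)
  ext i
  obtain ⟨j, rfl⟩ := e.symm.surjective i
  rcases j with j | j
  · exact congrFun hu₁ j
  · exact congrFun hu₂ j

lemma exists_pairCongruent_fromBlocks (e : ι ≃ κ ⊕ ν) {z : Matrix ι ι K} (hz : z.IsSymm)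
    (hzu : IsUnit z) {y : Matrix ι κ K} (hy : IsUnit (yᵀ * z⁻¹ * y)) :
    ∃ s : Matrix ν ν K, s.IsSymm ∧ IsUnit s ∧
      PairCongruent z y ((fromBlocks (yᵀ * z⁻¹ * y)⁻¹ 0 0 s).submatrix e e)
        ((fromRows 1 0 : Matrix (κ ⊕ ν) κ K).submatrix e id) := by
  obtain ⟨Q, hQ, hT⟩ := exists_mul_eq_zero_isUnit_fromCols e (A := yᵀ * z⁻¹) hy
  set T := (fromCols y Q).submatrix id e
  have hw : z⁻¹ᵀ = z⁻¹ := by rw [transpose_nonsing_inv, hz.eq]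
  have hQy : Qᵀ * z⁻¹ * y = 0 := by
    simpa [transpose_mul, hw, Matrix.mul_assoc] using congrArg transpose hQ
  set r := Qᵀ * z⁻¹ * Q
  have hD : Tᵀ * z⁻¹ * T = (fromBlocks (yᵀ * z⁻¹ * y) 0 0 r).submatrix e e := by
    rw [← hQ, ← hQy, ← fromRows_mul_fromCols, ← fromRows_mul, ← transpose_fromCols,
      submatrix_mul _ _ e id e Function.bijective_id,
      submatrix_mul _ _ e id id Function.bijective_id, submatrix_id_id, transpose_submatrix]
  have hru : IsUnit r := by
    have := (((isUnit_transpose T).2 hT).mul (isUnit_nonsing_inv_iff.2 hzu)).mul hT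
    rw [hD, isUnit_submatrix_equiv, isUnit_fromBlocks_zero₂₁] at this
    exact this.2
  have hTY : T * (fromRows (1 : Matrix κ κ K) (0 : Matrix ν κ K)).submatrix e id = y := by
    rw [submatrix_mul_equiv, fromCols_mul_fromRows, Matrix.mul_one, Matrix.mul_zero, add_zero,
      submatrix_id_id]
  refine ⟨r⁻¹, (hz.inv.transpose_mul_mul Q).inv, isUnit_nonsing_inv_iff.2 hru,
    T⁻¹, 1, isUnit_nonsing_inv_iff.2 hT, isUnit_one, ?_, ?_⟩
  · calc T⁻¹ * z * T⁻¹ᵀ = (Tᵀ * z⁻¹ * T)⁻¹ := by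
          rw [Matrix.mul_inv_rev, Matrix.mul_inv_rev, transpose_nonsing_inv, Matrix.mul_assoc,
            nonsing_inv_nonsing_inv z ((isUnit_iff_isUnit_det z).1 hzu)]
      _ = _ := by
          rw [hD, inv_submatrix_equiv,
            inv_fromBlocks_zero₂₁_of_isUnit_iff _ _ _ (iff_of_true hy hru),
            Matrix.mul_zero, Matrix.zero_mul, neg_zero]
  · rw [transpose_one, Matrix.mul_one, ← hTY, nonsing_inv_mul_cancel_left _ _
      ((isUnit_iff_isUnit_det T).1 hT)]

end Field

section Real

variable {ι κ ν : Type*} [DecidableEq ι] [DecidableEq κ] [DecidableEq ν]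

def signDiag (s : Finset ι) : Matrix ι ι ℝ := diagonal fun i => if i ∈ s then 1 else -1

lemma fromBlocks_signDiag (s : Finset ι) (t : Finset κ) :
    fromBlocks (signDiag s) 0 0 (signDiag t) = signDiag (s.disjSum t) := by
  rw [signDiag, signDiag, signDiag, fromBlocks_diagonal]
  congr 1
  ext (i | i) <;> simp

variable [Fintype ι] [Fintype κ] [Fintype ν]

lemma congruent_signDiag_iff {s t : Finset ι} :
    Congruent (signDiag s) (signDiag t) ↔ s.card = t.card := by
  have hsig (u : Finset ι) : sigPos
      (QuadraticMap.weightedSumSquares ℝ fun i => if i ∈ u then (1 : ℝ) else -1) = u.card := by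
    rw [QuadraticForm.sigPos_weightedSumSquares, ← Set.ncard_coe_finset]
    congr 1
    ext i
    by_cases hi : i ∈ u <;> simp [hi]
  constructor
  · intro h
    rw [← hsig s, ← hsig t]
    exact h.equivalent_weightedSumSquares.sigPos_eq.symm
  · intro h
    obtain ⟨σ, hσ⟩ : ∃ σ : Equiv.Perm ι, ∀ i, σ i ∈ s ↔ i ∈ t := by
      let e : {i // i ∈ t} ≃ {i // i ∈ s} := Fintype.equivOfCardEq (by simp [h])
      refine ⟨e.extendSubtype, fun i => ⟨fun hi => ?_, fun hi => ?_⟩⟩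
      · by_contra hit
        exact e.extendSubtype_not_mem i hit hi
      · rw [e.extendSubtype_apply_of_mem i hi]
        exact (e ⟨i, hi⟩).2
    convert congruent_submatrix_perm (signDiag s) σ
    rw [signDiag, signDiag, submatrix_diagonal_equiv]
    congr 1
    ext i
    simp [hσ]

lemma congruent_signDiag_diagonal {μ : ι → ℝ} (hμ : ∀ i, μ i ≠ 0) :
    Congruent (signDiag {i | 0 < μ i}) (diagonal μ) := by
  refine ⟨diagonal fun i => √|μ i|, isUnit_diagonal.2 (Pi.isUnit_iff.2 fun i =>
    (Real.sqrt_ne_zero'.2 (abs_pos.2 (hμ i))).isUnit), ?_⟩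
  rw [signDiag, diagonal_transpose, diagonal_mul_diagonal, diagonal_mul_diagonal]
  congr 1
  ext i
  have hsq : √|μ i| * (if 0 < μ i then 1 else -1) * √|μ i| =
      (if 0 < μ i then 1 else -1) * |μ i| := by
    rw [mul_comm, ← mul_assoc, Real.mul_self_sqrt (abs_nonneg _), mul_comm]
  rcases (hμ i).lt_or_gt with h | h
  · simpa [h.not_gt, abs_of_neg h] using hsq
  · simpa [h, abs_of_pos h] using hsq

lemma exists_congruent_signDiag {a : Matrix ι ι ℝ} (ha : a.IsSymm) (hau : IsUnit a) :
    ∃ s, Congruent a (signDiag s) := by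
  have hA : a.IsHermitian := ha
  have hμ : ∀ i, hA.eigenvalues i ≠ 0 := by
    intro i hi
    have := (isUnit_iff_isUnit_det a).1 hau
    rw [hA.det_eq_prod_eigenvalues,
      Finset.prod_eq_zero (Finset.mem_univ i) (by simp [hi])] at this
    exact not_isUnit_zero this
  refine ⟨({i | 0 < hA.eigenvalues i} : Finset ι), Congruent.symm ?_⟩
  refine (congruent_signDiag_diagonal hμ).trans ⟨hA.eigenvectorUnitary, ?_, ?_⟩
  · exact (Unitary.toUnits hA.eigenvectorUnitary).isUnit
  · conv_rhs => rw [hA.spectral_theorem, Unitary.conjStarAlgAut_apply]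
    rfl

lemma congruent_of_fromBlocks_congruent {a a' : Matrix κ κ ℝ} {s s' : Matrix ν ν ℝ}
    (ha : a.IsSymm) (hau : IsUnit a) (hs : s.IsSymm) (hsu : IsUnit s) (hs' : s'.IsSymm)
    (hsu' : IsUnit s') (haa' : Congruent a a')
    (h : Congruent (fromBlocks a 0 0 s) (fromBlocks a' 0 0 s')) : Congruent s s' := by
  obtain ⟨p, hp⟩ := exists_congruent_signDiag ha hau
  obtain ⟨q, hq⟩ := exists_congruent_signDiag hs hsu
  obtain ⟨q', hq'⟩ := exists_congruent_signDiag hs' hsu'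
  have hcard : Congruent (signDiag (p.disjSum q)) (signDiag (p.disjSum q')) := by
    rw [← fromBlocks_signDiag, ← fromBlocks_signDiag]
    exact ((hp.fromBlocks hq).symm.trans h).trans ((haa'.symm.trans hp).fromBlocks hq')
  rw [congruent_signDiag_iff, Finset.card_disjSum, Finset.card_disjSum] at hcard
  exact (hq.trans (congruent_signDiag_iff.2 (by omega))).trans hq'.symm

end Real

end Matrix

theorem stmt10_general (n d : ℕ) (hdn : d ≤ n)
    (z z' : Matrix (Fin n) (Fin n) ℝ) (hz : z.IsSymm) (hz' : z'.IsSymm)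
    (huz : IsUnit z) (huz' : IsUnit z')
    (y y' : Matrix (Fin n) (Fin d) ℝ)
    (hy : IsUnit (yᵀ * z⁻¹ * y)) (hy' : IsUnit (y'ᵀ * z'⁻¹ * y')) :
    (∃ (h : Matrix (Fin n) (Fin n) ℝ) (m : Matrix (Fin d) (Fin d) ℝ),
        IsUnit h ∧ IsUnit m ∧ h * z * hᵀ = z' ∧ h * y * mᵀ = y') ↔
      ((∃ g : Matrix (Fin n) (Fin n) ℝ, IsUnit g ∧ g * z * gᵀ = z') ∧
       (∃ c : Matrix (Fin d) (Fin d) ℝ, IsUnit c ∧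
          c * (yᵀ * z⁻¹ * y) * cᵀ = y'ᵀ * z'⁻¹ * y')) := by
  refine ⟨fun h : PairCongruent z y z' y' => ⟨h.congruent, h.congruent_transpose_mul_inv_mul⟩,
    fun ⟨hzz', hb⟩ => ?_⟩
  let e : Fin n ≃ Fin d ⊕ Fin (n - d) := (finCongr (by omega)).trans finSumFinEquiv.symm
  obtain ⟨s, hs, hsu, hzs⟩ := exists_pairCongruent_fromBlocks e hz huz hy
  obtain ⟨s', hs', hsu', hzs'⟩ := exists_pairCongruent_fromBlocks e hz' huz' hy'
  have hb' : Matrix.Congruent (yᵀ * z⁻¹ * y)⁻¹ (y'ᵀ * z'⁻¹ * y')⁻¹ := Congruent.inv hb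
  have hss' : Matrix.Congruent s s' := by
    refine congruent_of_fromBlocks_congruent (hz.inv.transpose_mul_mul y).inv
      (isUnit_nonsing_inv_iff.2 hy) hs hsu hs' hsu' hb' ?_
    simpa [submatrix_submatrix] using
      ((hzs.congruent.symm.trans hzz').trans hzs'.congruent).submatrix e.symm
  exact (hzs.trans (pairCongruent_fromBlocks e hb' hss')).trans hzs'.symm

theorem stmt10 (n d : ℕ) (hd : 1 ≤ d) (hdn : d ≤ n)
    (z z' : Matrix (Fin n) (Fin n) ℝ) (hz : z.IsSymm) (hz' : z'.IsSymm)
    (huz : IsUnit z) (huz' : IsUnit z')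
    (y y' : Matrix (Fin n) (Fin d) ℝ)
    (hy : IsUnit (yᵀ * z⁻¹ * y)) (hy' : IsUnit (y'ᵀ * z'⁻¹ * y')) :
    (∃ (h : Matrix (Fin n) (Fin n) ℝ) (m : Matrix (Fin d) (Fin d) ℝ),
        IsUnit h ∧ IsUnit m ∧ h * z * hᵀ = z' ∧ h * y * mᵀ = y') ↔
      ((∃ g : Matrix (Fin n) (Fin n) ℝ, IsUnit g ∧ g * z * gᵀ = z') ∧
       (∃ c : Matrix (Fin d) (Fin d) ℝ, IsUnit c ∧
          c * (yᵀ * z⁻¹ * y) * cᵀ = y'ᵀ * z'⁻¹ * y')) :=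
  stmt10_general n d hdn z z' hz hz' huz huz' y y' hy hy'
end

section
/- Let n ≥ d ≥ 1 and m₁, m₂ ∈ ℕ. Suppose f : M_n(ℂ) × M_{n,d}(ℂ) → ℂ is a polynomial function of the matrix entries (i.e. given by evaluation of a multivariate polynomial over ℂ in the n² + nd entries) such that for all h ∈ GL_n(ℂ), m ∈ GL_d(ℂ), all symmetric z ∈ M_n(ℂ) and all y ∈ M_{n,d}(ℂ): f(h·z·ᵗh, h·y·ᵗm) = (det h)^{2(m₁+m₂)}·(det m)^{2m₂}·f(z, y). Then there exists c ∈ ℂ such that for all symmetric z ∈ M_n(ℂ) and all y ∈ M_{n,d}(ℂ): f(z, y) = c·(det z)^{m₁}·((−1)^d·det([[z, y], [ᵗy, 0]]))^{m₂}. (For invertible z the latter equals c·(det z)^{m₁+m₂}·(det(ᵗy·z⁻¹·y))^{m₂}.) -/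
open Matrix

/-!
Over an algebraically closed field of characteristic `≠ 2` every invertible symmetric matrix is
congruent to `1`, and any `q` with `ᵗq q = 1` extends to an orthogonal matrix. Hence every pair
`(z, y)` with `z` symmetric and both `z`, `ᵗy z⁻¹ y` invertible is carried by `GL_n × GL_d` to
`(1, E)`, `E` the standard `d`-frame, so two relative invariants with the same character are
proportional on this set. The bordered-determinant invariant `det z ^ m₁ * borderedDet z y ^ m₂`
has the required character and equals `1` at `(1, E)`. The set is the nonvanishing locus of
`det z * det (ᵗy adj(z) y)`, which is `1` at `(1, E)`, so the polynomial identity extends to all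
symmetric `z`.
-/

section Congruence

variable {K ι : Type*} [Field K] [Invertible (2 : K)] [Fintype ι] [DecidableEq ι]

theorem Matrix.IsSymm.associated_toQuadraticForm' {s : Matrix ι ι K} (hs : s.IsSymm) :
    QuadraticMap.associated s.toQuadraticForm' = toLinearMap₂' K s :=
  QuadraticMap.associated_left_inverse K (isSymm_toBilin'_iff_isSymm.mpr hs).eq

theorem Matrix.IsSymm.toMatrix'_toQuadraticForm' {s : Matrix ι ι K} (hs : s.IsSymm) :
    s.toQuadraticForm'.toMatrix' = s := by
  rw [QuadraticForm.toMatrix', hs.associated_toQuadraticForm', LinearMap.toMatrix'_toLinearMap₂']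

theorem Matrix.IsSymm.separatingLeft_associated_toQuadraticForm' {s : Matrix ι ι K}
    (hs : s.IsSymm) (hu : IsUnit s) :
    (QuadraticMap.associated s.toQuadraticForm').SeparatingLeft := by
  rw [hs.associated_toQuadraticForm']
  exact LinearMap.separatingLeft_toLinearMap₂'_of_det_ne_zero'
    ((isUnit_iff_isUnit_det s).mp hu).ne_zero

theorem Matrix.IsSymm.exists_isUnit_mul_mul_transpose_eq_one [IsAlgClosed K] {s : Matrix ι ι K}
    (hs : s.IsSymm) (hu : IsUnit s) : ∃ a : Matrix ι ι K, IsUnit a ∧ a * s * aᵀ = 1 := by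
  obtain ⟨e⟩ := QuadraticForm.equivalent_of_isAlgClosed _ _
    (isSymm_one.separatingLeft_associated_toQuadraticForm' isUnit_one)
    (hs.separatingLeft_associated_toQuadraticForm' hu)
  have hcomp : (1 : Matrix ι ι K).toQuadraticForm' =
      s.toQuadraticForm'.comp e.toLinearEquiv.toLinearMap := by
    ext x
    exact (e.map_app x).symm
  refine ⟨(LinearMap.toMatrix' e.toLinearEquiv.toLinearMap)ᵀ, (isUnit_transpose _).mpr
    (LinearMap.isUnit_toMatrix'_iff.mpr ((Module.End.isUnit_iff _).mpr e.bijective)), ?_⟩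
  have := congrArg QuadraticForm.toMatrix' hcomp
  rwa [QuadraticForm.toMatrix'_comp, hs.toMatrix'_toQuadraticForm',
    isSymm_one.toMatrix'_toQuadraticForm', eq_comm] at this

end Congruence

section Frame

variable {R ι κ ν : Type*} [DecidableEq ι]

variable (R) in
def Matrix.frame [Zero R] [One R] (e : κ ⊕ ν ≃ ι) : Matrix ι κ R :=
  (1 : Matrix ι ι R).submatrix id (e ∘ Sum.inl)

theorem Matrix.transpose_frame_mul_frame [NonAssocSemiring R] [Fintype ι] [DecidableEq κ]
    (e : κ ⊕ ν ≃ ι) : (frame R e)ᵀ * frame R e = 1 := by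
  rw [frame, transpose_submatrix, transpose_one, ← Equiv.coe_refl, mul_submatrix_one]
  exact submatrix_one_embedding (Function.Embedding.inl.trans e.toEmbedding)

end Frame

section Orbits

variable {K ι κ ν : Type*} [Field K] [Fintype ι] [Fintype κ] [Fintype ν] [DecidableEq ν]

theorem Matrix.isUnit_transpose_mul_self_of_span {q : Matrix ι κ K} {k : Matrix ι ν K}
    (hqk : qᵀ * k = 0) (hk : Function.Injective k.mulVec)
    (hspan : ∀ x, ∃ a u, x = q *ᵥ a + k *ᵥ u) : IsUnit (kᵀ * k) := by
  refine mulVec_injective_iff_isUnit.mp fun v₁ v₂ hv => hk (sub_eq_zero.mp ?_)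
  rw [← mulVec_sub]
  have hv' : (kᵀ * k) *ᵥ (v₁ - v₂) = 0 := by rw [mulVec_sub, hv, sub_self]
  -- `k *ᵥ (v₁ - v₂)` is orthogonal to the ranges of `q` and of `k`, which span everything.
  refine dotProduct_eq_zero_iff.mp fun x => ?_
  obtain ⟨a, u, rfl⟩ := hspan x
  rw [dotProduct_add, dotProduct_mulVec, dotProduct_mulVec, ← mulVec_transpose,
    ← mulVec_transpose, mulVec_mulVec, mulVec_mulVec, hqk, hv', zero_mulVec, zero_dotProduct,
    zero_dotProduct, add_zero]

variable [DecidableEq κ]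

theorem Matrix.exists_orthonormal_complement [Invertible (2 : K)] [IsAlgClosed K]
    {q : Matrix ι κ K} (hq : qᵀ * q = 1)
    (hcard : Fintype.card κ + Fintype.card ν = Fintype.card ι) :
    ∃ w : Matrix ι ν K, qᵀ * w = 0 ∧ wᵀ * w = 1 := by
  let W := LinearMap.ker qᵀ.mulVecLin
  have hrange : LinearMap.range qᵀ.mulVecLin = ⊤ := LinearMap.range_eq_top.mpr fun v =>
    ⟨q *ᵥ v, by rw [mulVecLin_apply, mulVec_mulVec, hq, one_mulVec]⟩
  have hW : Module.finrank K (ν → K) = Module.finrank K W := by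
    have := LinearMap.finrank_range_add_finrank_ker qᵀ.mulVecLin
    rw [hrange, finrank_top] at this
    simp only [Module.finrank_fintype_fun_eq_card] at this ⊢
    change _ + Module.finrank K W = _ at this
    omega
  let L := LinearEquiv.ofFinrankEq _ _ hW
  let k := LinearMap.toMatrix' (W.subtype ∘ₗ L.toLinearMap)
  have hk (v : ν → K) : k *ᵥ v = L v := LinearMap.toMatrix'_mulVec _ v
  have hqk : qᵀ * k = 0 := ext_of_mulVec_single fun j => by
    rw [← mulVec_mulVec, hk, zero_mulVec]
    exact (L _).2
  have hspan (x : ι → K) : ∃ a u, x = q *ᵥ a + k *ᵥ u := by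
    have hx : x - q *ᵥ (qᵀ *ᵥ x) ∈ W := by
      rw [LinearMap.mem_ker, mulVecLin_apply, mulVec_sub, mulVec_mulVec, hq, one_mulVec, sub_self]
    obtain ⟨u, hu⟩ := L.surjective ⟨_, hx⟩
    exact ⟨qᵀ *ᵥ x, u, by rw [hk, hu, add_sub_cancel]⟩
  have hk_inj : Function.Injective k.mulVec := fun v₁ v₂ hv =>
    L.injective (Subtype.ext (by rw [← hk, ← hk, hv]))
  obtain ⟨a, -, ha⟩ := IsSymm.exists_isUnit_mul_mul_transpose_eq_one
    (by rw [IsSymm, transpose_mul, transpose_transpose])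
    (isUnit_transpose_mul_self_of_span hqk hk_inj hspan)
  refine ⟨k * aᵀ, by rw [← Matrix.mul_assoc, hqk, Matrix.zero_mul], ?_⟩
  rw [transpose_mul, transpose_transpose, Matrix.mul_assoc, ← Matrix.mul_assoc kᵀ,
    ← Matrix.mul_assoc, ha]

variable [DecidableEq ι]

theorem Matrix.exists_transpose_mul_self_eq_one_and_mul_frame_eq [Invertible (2 : K)]
    [IsAlgClosed K] (e : κ ⊕ ν ≃ ι) {q : Matrix ι κ K} (hq : qᵀ * q = 1) :
    ∃ O : Matrix ι ι K, Oᵀ * O = 1 ∧ O * frame K e = q := by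
  obtain ⟨w, hqw, hw⟩ := exists_orthonormal_complement (ν := ν) hq
    (by rw [← Fintype.card_sum, Fintype.card_congr e])
  have hwq : wᵀ * q = 0 := by
    rw [← transpose_transpose (wᵀ * q), transpose_mul, transpose_transpose, hqw, transpose_zero]
  refine ⟨(fromCols q w).submatrix id e.symm, ?_, ?_⟩
  · rw [transpose_submatrix, ← Equiv.coe_refl, submatrix_mul_equiv, transpose_fromCols,
      fromRows_mul_fromCols, hq, hqw, hwq, hw, fromBlocks_one, submatrix_one_equiv]
  · rw [frame, ← Equiv.coe_refl, mul_submatrix_one]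
    ext i j
    simp

theorem Matrix.IsSymm.exists_normalizing_pair [Invertible (2 : K)] [IsAlgClosed K]
    (e : κ ⊕ ν ≃ ι) {z : Matrix ι ι K} {y : Matrix ι κ K} (hz : z.IsSymm)
    (hzu : IsUnit z) (hyu : IsUnit (yᵀ * z⁻¹ * y)) :
    ∃ (g : Matrix ι ι K) (n : Matrix κ κ K),
      IsUnit g ∧ IsUnit n ∧ g * z * gᵀ = 1 ∧ g * y * nᵀ = frame K e := by
  obtain ⟨a, ha, haz⟩ := hz.exists_isUnit_mul_mul_transpose_eq_one hzu
  have hzinv : z⁻¹ = aᵀ * a := inv_eq_left_inv (by rw [Matrix.mul_assoc, mul_eq_one_comm, haz])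
  have hs : (yᵀ * z⁻¹ * y).IsSymm := by
    rw [IsSymm, hzinv]
    simp only [transpose_mul, transpose_transpose, Matrix.mul_assoc]
  obtain ⟨b, hb, hbs⟩ := hs.exists_isUnit_mul_mul_transpose_eq_one hyu
  obtain ⟨O, hO, hOq⟩ := exists_transpose_mul_self_eq_one_and_mul_frame_eq e
    (q := a * y * bᵀ) (by
      rw [← hbs, hzinv]
      simp only [transpose_mul, transpose_transpose, Matrix.mul_assoc])
  have hOu : IsUnit O := (isUnit_iff_isUnit_det O).mpr (isUnit_det_of_left_inverse hO)
  refine ⟨Oᵀ * a, b, ((isUnit_transpose O).mpr hOu).mul ha, hb, ?_, ?_⟩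
  · calc Oᵀ * a * z * (Oᵀ * a)ᵀ = Oᵀ * (a * z * aᵀ) * O := by
          simp only [transpose_mul, transpose_transpose, Matrix.mul_assoc]
      _ = 1 := by rw [haz, Matrix.mul_one, hO]
  · calc Oᵀ * a * y * bᵀ = Oᵀ * (a * y * bᵀ) := by simp only [Matrix.mul_assoc]
      _ = frame K e := by rw [← hOq, ← Matrix.mul_assoc, hO, Matrix.one_mul]

theorem Matrix.isUnit_and_isUnit_of_det_mul_det_ne_zero {z : Matrix ι ι K} {y : Matrix ι κ K}
    (h : z.det * (yᵀ * z.adjugate * y).det ≠ 0) : IsUnit z ∧ IsUnit (yᵀ * z⁻¹ * y) := by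
  obtain ⟨hz, hy⟩ := mul_ne_zero_iff.mp h
  refine ⟨(isUnit_iff_isUnit_det z).mpr (isUnit_iff_ne_zero.mpr hz), ?_⟩
  rw [inv_def, Ring.inverse_eq_inv', Matrix.mul_smul, Matrix.smul_mul, isUnit_iff_isUnit_det,
    det_smul, isUnit_iff_ne_zero]
  exact mul_ne_zero (pow_ne_zero _ (inv_ne_zero hz)) hy

end Orbits

section RelativeInvariants

variable {R S ι κ : Type*} [CommRing R] [CommRing S] [Fintype ι] [DecidableEq ι] [Fintype κ]
  [DecidableEq κ]

def Matrix.borderedDet (z : Matrix ι ι R) (y : Matrix ι κ R) : R :=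
  (-1) ^ Fintype.card κ * (fromBlocks z y yᵀ 0).det

theorem Matrix.borderedDet_mul_mul_transpose (h : Matrix ι ι R) (m : Matrix κ κ R)
    (z : Matrix ι ι R) (y : Matrix ι κ R) :
    borderedDet (h * z * hᵀ) (h * y * mᵀ) = h.det ^ 2 * m.det ^ 2 * borderedDet z y := by
  have hblocks : fromBlocks (h * z * hᵀ) (h * y * mᵀ) (h * y * mᵀ)ᵀ 0 =
      fromBlocks h 0 0 m * fromBlocks z y yᵀ 0 * fromBlocks hᵀ 0 0 mᵀ := by
    simp [fromBlocks_multiply, transpose_mul, Matrix.mul_assoc]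
  rw [borderedDet, borderedDet, hblocks, det_mul, det_mul, det_fromBlocks_zero₂₁,
    det_fromBlocks_zero₂₁, det_transpose, det_transpose]
  ring

theorem Matrix.borderedDet_one {E : Matrix ι κ R} (hE : Eᵀ * E = 1) : borderedDet 1 E = 1 := by
  rw [borderedDet, det_fromBlocks_one₁₁, hE, zero_sub, det_neg, det_one, mul_one, ← mul_pow]
  norm_num

theorem RingHom.map_borderedDet (φ : R →+* S) (z : Matrix ι ι R) (y : Matrix ι κ R) :
    φ (borderedDet z y) = borderedDet (z.map φ) (y.map φ) := by
  simp [borderedDet, RingHom.map_det, fromBlocks_map, transpose_map]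

def Matrix.IsRelInvariant (a b : ℕ) (F : Matrix ι ι R → Matrix ι κ R → R) : Prop :=
  ∀ (h : Matrix ι ι R) (m : Matrix κ κ R) (z : Matrix ι ι R) (y : Matrix ι κ R),
    IsUnit h → IsUnit m → z.IsSymm →
      F (h * z * hᵀ) (h * y * mᵀ) = h.det ^ a * m.det ^ b * F z y

theorem Matrix.isRelInvariant_det_pow_mul_borderedDet_pow (m₁ m₂ : ℕ) :
    IsRelInvariant (2 * (m₁ + m₂)) (2 * m₂)
      (fun (z : Matrix ι ι R) (y : Matrix ι κ R) => z.det ^ m₁ * borderedDet z y ^ m₂) := by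
  intro h m z y _ _ _
  simp only [borderedDet_mul_mul_transpose, det_mul, det_transpose]
  ring

theorem Matrix.IsRelInvariant.mul_apply_frame_eq {K ν : Type*} [Field K] [Invertible (2 : K)]
    [IsAlgClosed K] [Fintype ν] [DecidableEq ν] {a b : ℕ}
    {F G : Matrix ι ι K → Matrix ι κ K → K} (hF : IsRelInvariant a b F)
    (hG : IsRelInvariant a b G) (e : κ ⊕ ν ≃ ι) {z : Matrix ι ι K} {y : Matrix ι κ K}
    (hz : z.IsSymm) (hzu : IsUnit z) (hyu : IsUnit (yᵀ * z⁻¹ * y)) :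
    F z y * G 1 (frame K e) = F 1 (frame K e) * G z y := by
  obtain ⟨g, n, hg, hn, hgz, hgy⟩ := hz.exists_normalizing_pair e hzu hyu
  have hF' := hF g n z y hg hn hz
  have hG' := hG g n z y hg hn hz
  rw [hgz, hgy] at hF' hG'
  rw [hF', hG']
  ring

end RelativeInvariants

section PolynomialFunctions

variable {R ι κ : Type*} [CommRing R]

theorem MvPolynomial.eq_of_eval_eq_of_eval_ne_zero {σ : Type*} [IsDomain R] [Infinite R]
    {P Q D : MvPolynomial σ R} (hD : D ≠ 0) (h : ∀ x, eval x D ≠ 0 → eval x P = eval x Q) :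
    P = Q := by
  have hPQD : (P - Q) * D = 0 := MvPolynomial.funext fun x => by
    by_cases hx : eval x D = 0 <;> simp [hx, h]
  exact sub_eq_zero.mp ((mul_eq_zero.mp hPQD).resolve_right hD)

def Matrix.pairCoords (z : Matrix ι ι R) (y : Matrix ι κ R) : (ι × ι) ⊕ (ι × κ) → R :=
  Sum.elim (fun p => z p.1 p.2) (fun p => y p.1 p.2)

def Matrix.IsPolynomialFun (F : Matrix ι ι R → Matrix ι κ R → R) : Prop :=
  ∃ P : MvPolynomial ((ι × ι) ⊕ (ι × κ)) R,
    ∀ z y, F z y = MvPolynomial.eval (pairCoords z y) P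

variable (R ι κ) in
noncomputable def Matrix.mvPolynomialZ :
    Matrix ι ι (MvPolynomial ((ι × ι) ⊕ (ι × κ)) R) :=
  of fun i j => MvPolynomial.X (.inl (i, j))

variable (R ι κ) in
noncomputable def Matrix.mvPolynomialY :
    Matrix ι κ (MvPolynomial ((ι × ι) ⊕ (ι × κ)) R) :=
  of fun i j => MvPolynomial.X (.inr (i, j))

@[simp]
theorem Matrix.mvPolynomialZ_map_eval (z : Matrix ι ι R) (y : Matrix ι κ R) :
    (mvPolynomialZ R ι κ).map (MvPolynomial.eval (pairCoords z y)) = z := by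
  ext
  simp [mvPolynomialZ, pairCoords]

@[simp]
theorem Matrix.mvPolynomialY_map_eval (z : Matrix ι ι R) (y : Matrix ι κ R) :
    (mvPolynomialY R ι κ).map (MvPolynomial.eval (pairCoords z y)) = y := by
  ext
  simp [mvPolynomialY, pairCoords]

theorem Matrix.IsPolynomialFun.const_mul {F : Matrix ι ι R → Matrix ι κ R → R}
    (hF : IsPolynomialFun F) (c : R) : IsPolynomialFun fun z y => c * F z y := by
  obtain ⟨P, hP⟩ := hF
  exact ⟨MvPolynomial.C c * P, fun z y => by simp [hP]⟩

theorem Matrix.IsPolynomialFun.eq_of_isSymm {K : Type*} [Field K] [Infinite K] [NeZero (2 : K)]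
    {F G D : Matrix ι ι K → Matrix ι κ K → K} (hF : IsPolynomialFun F)
    (hG : IsPolynomialFun G) (hD : IsPolynomialFun D)
    {z₀ : Matrix ι ι K} {y₀ : Matrix ι κ K} (hz₀ : z₀.IsSymm)
    (hD₀ : D z₀ y₀ ≠ 0)
    (h : ∀ z y, z.IsSymm → D z y ≠ 0 → F z y = G z y)
    {z : Matrix ι ι K} (y : Matrix ι κ K) (hz : z.IsSymm) : F z y = G z y := by
  obtain ⟨P, hP⟩ := hF
  obtain ⟨Q, hQ⟩ := hG
  obtain ⟨Δ, hΔ⟩ := hD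
  -- Symmetric matrices are parametrised polynomially by `A ↦ A + Aᵀ`.
  let sym := pairCoords (mvPolynomialZ K ι κ + (mvPolynomialZ K ι κ)ᵀ) (mvPolynomialY K ι κ)
  have heval (A : Matrix ι ι K) (y : Matrix ι κ K) (T : MvPolynomial _ K) :
      MvPolynomial.eval (pairCoords A y) (MvPolynomial.bind₁ sym T) =
        MvPolynomial.eval (pairCoords (A + Aᵀ) y) T := by
    refine (MvPolynomial.eval₂Hom_bind₁ _ _ _ T).trans (congrArg (MvPolynomial.eval · T) ?_)
    funext s
    rcases s with ⟨i, j⟩ | ⟨i, j⟩ <;> simp [sym, pairCoords, mvPolynomialZ, mvPolynomialY]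
  have hhalf {z : Matrix ι ι K} (hz : z.IsSymm) :
      (2⁻¹ : K) • z + ((2⁻¹ : K) • z)ᵀ = z := by
    rw [transpose_smul, hz.eq, ← add_smul, ← two_mul, mul_inv_cancel₀ two_ne_zero, one_smul]
  have hbind : MvPolynomial.bind₁ sym P = MvPolynomial.bind₁ sym Q := by
    refine MvPolynomial.eq_of_eval_eq_of_eval_ne_zero (D := MvPolynomial.bind₁ sym Δ) ?_ ?_
    · intro h0
      apply hD₀
      rw [hΔ, ← hhalf hz₀, ← heval, h0, map_zero]
    · intro x hx
      obtain ⟨A, y, rfl⟩ : ∃ A y, x = pairCoords A y :=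
        ⟨of fun i j => x (.inl (i, j)), of fun i j => x (.inr (i, j)), by
          funext s
          rcases s with ⟨i, j⟩ | ⟨i, j⟩ <;> rfl⟩
      rw [heval, ← hΔ] at hx
      rw [heval, heval, ← hP, ← hQ]
      exact h _ _ (by simp [IsSymm, add_comm]) hx
  rw [hP, hQ, ← hhalf hz, ← heval, ← heval, hbind]

variable [Fintype ι] [DecidableEq ι] [Fintype κ] [DecidableEq κ]

theorem Matrix.isPolynomialFun_det_pow_mul_borderedDet_pow (a b : ℕ) :
    IsPolynomialFun fun (z : Matrix ι ι R) (y : Matrix ι κ R) =>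
      z.det ^ a * borderedDet z y ^ b :=
  ⟨(mvPolynomialZ R ι κ).det ^ a *
      borderedDet (mvPolynomialZ R ι κ) (mvPolynomialY R ι κ) ^ b,
    fun z y => by simp [RingHom.map_det, RingHom.map_borderedDet]⟩

theorem Matrix.isPolynomialFun_det_mul_det :
    IsPolynomialFun fun (z : Matrix ι ι R) (y : Matrix ι κ R) =>
      z.det * (yᵀ * z.adjugate * y).det := by
  let Z := mvPolynomialZ R ι κ
  let Y := mvPolynomialY R ι κ
  refine ⟨Z.det * (Yᵀ * Z.adjugate * Y).det, fun z y => ?_⟩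
  have hadj : Z.adjugate.map (MvPolynomial.eval (pairCoords z y)) = z.adjugate :=
    ((MvPolynomial.eval (pairCoords z y)).map_adjugate Z).trans (by simp [Z])
  simp [Z, Y, RingHom.map_det, hadj, transpose_map]

end PolynomialFunctions

theorem stmt13_general (n d m₁ m₂ : ℕ) (hdn : d ≤ n)
    (f : Matrix (Fin n) (Fin n) ℂ → Matrix (Fin n) (Fin d) ℂ → ℂ)
    (hpoly : ∃ P : MvPolynomial ((Fin n × Fin n) ⊕ (Fin n × Fin d)) ℂ,
      ∀ (z : Matrix (Fin n) (Fin n) ℂ) (y : Matrix (Fin n) (Fin d) ℂ),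
        f z y = MvPolynomial.eval
          (Sum.elim (fun p => z p.1 p.2) (fun p => y p.1 p.2)) P)
    (hrel : ∀ (h : Matrix (Fin n) (Fin n) ℂ) (m : Matrix (Fin d) (Fin d) ℂ)
        (z : Matrix (Fin n) (Fin n) ℂ) (y : Matrix (Fin n) (Fin d) ℂ),
        IsUnit h → IsUnit m → z.IsSymm →
        f (h * z * hᵀ) (h * y * mᵀ) =
          h.det ^ (2 * (m₁ + m₂)) * m.det ^ (2 * m₂) * f z y) :
    ∃ c : ℂ, ∀ (z : Matrix (Fin n) (Fin n) ℂ) (y : Matrix (Fin n) (Fin d) ℂ),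
      z.IsSymm →
      f z y = c * z.det ^ m₁ *
        ((-1) ^ d * (Matrix.fromBlocks z y yᵀ (0 : Matrix (Fin d) (Fin d) ℂ)).det) ^ m₂ := by
  let e : Fin d ⊕ Fin (n - d) ≃ Fin n :=
    finSumFinEquiv.trans (finCongr (Nat.add_sub_cancel' hdn))
  let c := f 1 (frame ℂ e)
  have hgeneric (z y) (hz : z.IsSymm) (hD : z.det * (yᵀ * z.adjugate * y).det ≠ 0) :
      f z y = c * (z.det ^ m₁ * borderedDet z y ^ m₂) := by
    obtain ⟨hzu, hyu⟩ := isUnit_and_isUnit_of_det_mul_det_ne_zero hD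
    have := IsRelInvariant.mul_apply_frame_eq (F := f) hrel
      (isRelInvariant_det_pow_mul_borderedDet_pow m₁ m₂) e hz hzu hyu
    rwa [det_one, one_pow, borderedDet_one (transpose_frame_mul_frame e), one_pow, mul_one,
      mul_one] at this
  refine ⟨c, fun z y hz => ?_⟩
  rw [IsPolynomialFun.eq_of_isSymm hpoly
    ((isPolynomialFun_det_pow_mul_borderedDet_pow m₁ m₂).const_mul c)
    isPolynomialFun_det_mul_det (y₀ := frame ℂ e) isSymm_one
    (by simp [transpose_frame_mul_frame]) hgeneric y hz,
    borderedDet, Fintype.card_fin, mul_assoc]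

theorem stmt13 (n d m₁ m₂ : ℕ) (hd : 1 ≤ d) (hdn : d ≤ n)
    (f : Matrix (Fin n) (Fin n) ℂ → Matrix (Fin n) (Fin d) ℂ → ℂ)
    (hpoly : ∃ P : MvPolynomial ((Fin n × Fin n) ⊕ (Fin n × Fin d)) ℂ,
      ∀ (z : Matrix (Fin n) (Fin n) ℂ) (y : Matrix (Fin n) (Fin d) ℂ),
        f z y = MvPolynomial.eval
          (Sum.elim (fun p => z p.1 p.2) (fun p => y p.1 p.2)) P)
    (hrel : ∀ (h : Matrix (Fin n) (Fin n) ℂ) (m : Matrix (Fin d) (Fin d) ℂ)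
        (z : Matrix (Fin n) (Fin n) ℂ) (y : Matrix (Fin n) (Fin d) ℂ),
        IsUnit h → IsUnit m → z.IsSymm →
        f (h * z * hᵀ) (h * y * mᵀ) =
          h.det ^ (2 * (m₁ + m₂)) * m.det ^ (2 * m₂) * f z y) :
    ∃ c : ℂ, ∀ (z : Matrix (Fin n) (Fin n) ℂ) (y : Matrix (Fin n) (Fin d) ℂ),
      z.IsSymm →
      f z y = c * z.det ^ m₁ *
        ((-1) ^ d * (Matrix.fromBlocks z y yᵀ (0 : Matrix (Fin d) (Fin d) ℂ)).det) ^ m₂ :=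
  stmt13_general n d m₁ m₂ hdn f hpoly hrel
end

section
/- Let n ≥ 1 and let z be a real symmetric n×n matrix. Then 1ₙ + z² is positive definite; let h be its (unique) symmetric positive definite square root, so h² = 1ₙ + z², and h commutes with z. Then the following factorization holds in M_{2n}(ℝ): [[1ₙ, 0], [z, 1ₙ]] = k · [[h, 0], [0, h⁻¹]] · [[1ₙ, h⁻¹·z·h⁻¹], [0, 1ₙ]], where k := [[h⁻¹, −h⁻¹·z], [h⁻¹·z, h⁻¹]]; moreover k ∈ Sp_{2n}(ℝ) ∩ O(2n). -/
/-!
The square root `h` of `1 + z²` is `CFC.sqrt (1 + z²)`, a continuous function of `1 + z²`, so it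
commutes with `z`. Hence `a = h⁻¹` and `b = h⁻¹ z` are commuting symmetric matrices with
`a² + b² = 1`: the complex matrix `a + i b` is unitary, which is exactly what makes its real form
`k = [[a, -b], [b, a]]` both orthogonal and symplectic. The factorization itself is a block
computation using `h⁻¹ z h = z` and `z h⁻¹ z h⁻¹ + h⁻² = 1`.
-/

open Matrix

/-- `Jₙ = [[0, -1ₙ], [1ₙ, 0]]`. -/
def JJ (n : ℕ) : Matrix (Fin n ⊕ Fin n) (Fin n ⊕ Fin n) ℝ :=
  Matrix.fromBlocks 0 (-1) 1 0

/-- The real symplectic group `Sp_{2n}(ℝ) = {g : ᵗg·Jₙ·g = Jₙ}`. -/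
def SpSet (n : ℕ) : Set (Matrix (Fin n ⊕ Fin n) (Fin n ⊕ Fin n) ℝ) :=
  {g | gᵀ * JJ n * g = JJ n}

namespace Matrix

variable {m R : Type*} [Fintype m] [DecidableEq m] [CommRing R]

lemma posDef_one_add_mul_self {z : Matrix m m ℝ} (hz : z.IsSymm) : (1 + z * z).PosDef := by
  have hzz : (z * z).PosSemidef := by
    simpa [conjTranspose_eq_transpose_of_trivial, hz.eq] using posSemidef_conjTranspose_mul_self z
  exact PosDef.one.add_posSemidef hzz

open scoped MatrixOrder

lemma PosDef.existsUnique_posDef_mul_self_eq {P : Matrix m m ℝ} (hP : P.PosDef) :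
    ∃! h : Matrix m m ℝ, h.PosDef ∧ h * h = P :=
  ⟨CFC.sqrt P,
    ⟨hP.isStrictlyPositive.sqrt.posDef, CFC.sqrt_mul_sqrt_self P hP.posSemidef.nonneg⟩,
    fun _ ⟨hh, hsq⟩ => (CFC.sqrt_unique hsq hh.posSemidef.nonneg).symm⟩

lemma PosSemidef.commute_of_commute_mul_self {h a : Matrix m m ℝ} (hh : h.PosSemidef)
    (hc : Commute (h * h) a) : Commute h a := by
  rw [← CFC.sqrt_unique rfl hh.nonneg, CFC.sqrt_eq_cfc]
  exact hc.cfc_nnreal _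

lemma Commute.nonsing_inv_left {h z : Matrix m m R} (hc : Commute h z) :
    Commute h⁻¹ z := by
  by_cases hh : IsUnit h
  · obtain ⟨u, rfl⟩ := hh
    rw [← coe_units_inv]
    exact hc.units_inv_left
  · rw [nonsing_inv_apply_not_isUnit h (mt h.isUnit_iff_isUnit_det.mpr hh)]
    exact Commute.zero_left z

lemma nonsing_inv_mul_self_add_mul_self {h z : Matrix m m R} (hh : IsUnit h) (hc : Commute h z)
    (hsq : h * h = 1 + z * z) : h⁻¹ * h⁻¹ + (h⁻¹ * z) * (h⁻¹ * z) = 1 := by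
  have hdet := h.isUnit_iff_isUnit_det.mp hh
  calc h⁻¹ * h⁻¹ + (h⁻¹ * z) * (h⁻¹ * z) = h⁻¹ * h⁻¹ * (h * h) := by
        rw [hsq, mul_add, mul_one]
        congr 1
        simp only [mul_assoc]
        rw [← mul_assoc z, ← hc.nonsing_inv_left.eq, mul_assoc]
    _ = 1 := by rw [mul_assoc, ← mul_assoc h⁻¹ h, nonsing_inv_mul h hdet, one_mul,
        nonsing_inv_mul h hdet]

lemma fromBlocks_one_zero_one_eq {h z : Matrix m m R} (hh : IsUnit h) (hc : Commute h z)
    (hsq : h * h = 1 + z * z) :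
    fromBlocks 1 0 z 1 =
      fromBlocks h⁻¹ (-(h⁻¹ * z)) (h⁻¹ * z) h⁻¹ * fromBlocks h 0 0 h⁻¹ *
        fromBlocks 1 (h⁻¹ * z * h⁻¹) 0 1 := by
  have hinv : h⁻¹ * h = 1 := nonsing_inv_mul h (h.isUnit_iff_isUnit_det.mp hh)
  have hzh : h⁻¹ * z * h = z := by rw [mul_assoc, ← hc.eq, ← mul_assoc, hinv, one_mul]
  have hzz : z * (h⁻¹ * z * h⁻¹) = h⁻¹ * z * (h⁻¹ * z) := by
    rw [← mul_assoc, ← mul_assoc, ← hc.nonsing_inv_left.eq, mul_assoc _ z h⁻¹,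
      ← hc.nonsing_inv_left.eq, ← mul_assoc]
  rw [fromBlocks_multiply, fromBlocks_multiply, fromBlocks_inj]
  simp only [mul_zero, add_zero, zero_add, mul_one, one_mul, neg_mul, add_neg_cancel, hinv, hzh,
    hzz, add_comm _ (h⁻¹ * h⁻¹), nonsing_inv_mul_self_add_mul_self hh hc hsq, and_self]

lemma fromBlocks_transpose_mul_self_eq_one {a b : Matrix m m R} (h1 : aᵀ * a + bᵀ * b = 1)
    (h2 : aᵀ * b = bᵀ * a) :
    (fromBlocks a (-b) b a)ᵀ * fromBlocks a (-b) b a = 1 := by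
  rw [fromBlocks_transpose, fromBlocks_multiply, ← fromBlocks_one, fromBlocks_inj]
  simp only [transpose_neg, neg_mul, mul_neg, neg_neg, h1, h2, add_comm (bᵀ * b), neg_add_cancel,
    and_self]

lemma fromBlocks_mem_spSet {n : ℕ} {a b : Matrix (Fin n) (Fin n) ℝ}
    (h1 : aᵀ * a + bᵀ * b = 1) (h2 : aᵀ * b = bᵀ * a) :
    fromBlocks a (-b) b a ∈ SpSet n := by
  change _ * JJ n * _ = JJ n
  rw [JJ, fromBlocks_transpose, fromBlocks_multiply, fromBlocks_multiply, fromBlocks_inj]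
  simp only [transpose_neg, neg_mul, mul_neg, neg_neg, mul_zero, mul_one, add_zero, zero_add, h1,
    h2, add_comm (bᵀ * b), neg_add_cancel, add_neg_cancel, ← neg_add, and_self]

end Matrix

theorem stmt15_general (n : ℕ) (z : Matrix (Fin n) (Fin n) ℝ) (hz : z.IsSymm) :
    (1 + z * z).PosDef ∧
    (∃! h : Matrix (Fin n) (Fin n) ℝ, h.PosDef ∧ h * h = 1 + z * z) ∧
    ∀ h : Matrix (Fin n) (Fin n) ℝ, h.PosDef → h * h = 1 + z * z →
      h * z = z * h ∧
      Matrix.fromBlocks 1 0 z 1 =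
        Matrix.fromBlocks h⁻¹ (-(h⁻¹ * z)) (h⁻¹ * z) h⁻¹ *
          Matrix.fromBlocks h 0 0 h⁻¹ *
          Matrix.fromBlocks 1 (h⁻¹ * z * h⁻¹) 0 1 ∧
      Matrix.fromBlocks h⁻¹ (-(h⁻¹ * z)) (h⁻¹ * z) h⁻¹ ∈ SpSet n ∧
      (Matrix.fromBlocks h⁻¹ (-(h⁻¹ * z)) (h⁻¹ * z) h⁻¹)ᵀ *
        Matrix.fromBlocks h⁻¹ (-(h⁻¹ * z)) (h⁻¹ * z) h⁻¹ = 1 := by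
  have hP := posDef_one_add_mul_self hz
  refine ⟨hP, hP.existsUnique_posDef_mul_self_eq, fun h hh hsq => ?_⟩
  have hc : Commute h z := hh.posSemidef.commute_of_commute_mul_self <| hsq ▸
    (Commute.one_left z).add_left ((Commute.refl z).mul_left (Commute.refl z))
  have hinvT : h⁻¹ᵀ = h⁻¹ := by
    rw [transpose_nonsing_inv, ← conjTranspose_eq_transpose_of_trivial, hh.isHermitian.eq]
  have hbT : (h⁻¹ * z)ᵀ = h⁻¹ * z := by
    rw [transpose_mul, hinvT, hz.eq, hc.nonsing_inv_left.eq]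
  have h1 : h⁻¹ᵀ * h⁻¹ + (h⁻¹ * z)ᵀ * (h⁻¹ * z) = 1 := by
    rw [hinvT, hbT, nonsing_inv_mul_self_add_mul_self hh.isUnit hc hsq]
  have h2 : h⁻¹ᵀ * (h⁻¹ * z) = (h⁻¹ * z)ᵀ * h⁻¹ := by
    rw [hinvT, hbT, mul_assoc, hc.nonsing_inv_left.eq]
  exact ⟨hc.eq, fromBlocks_one_zero_one_eq hh.isUnit hc hsq, fromBlocks_mem_spSet h1 h2,
    fromBlocks_transpose_mul_self_eq_one h1 h2⟩

theorem stmt15 (n : ℕ) (hn : 1 ≤ n) (z : Matrix (Fin n) (Fin n) ℝ) (hz : z.IsSymm) :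
    (1 + z * z).PosDef ∧
    (∃! h : Matrix (Fin n) (Fin n) ℝ, h.PosDef ∧ h * h = 1 + z * z) ∧
    ∀ h : Matrix (Fin n) (Fin n) ℝ, h.PosDef → h * h = 1 + z * z →
      h * z = z * h ∧
      Matrix.fromBlocks 1 0 z 1 =
        Matrix.fromBlocks h⁻¹ (-(h⁻¹ * z)) (h⁻¹ * z) h⁻¹ *
          Matrix.fromBlocks h 0 0 h⁻¹ *
          Matrix.fromBlocks 1 (h⁻¹ * z * h⁻¹) 0 1 ∧
      Matrix.fromBlocks h⁻¹ (-(h⁻¹ * z)) (h⁻¹ * z) h⁻¹ ∈ SpSet n ∧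
      (Matrix.fromBlocks h⁻¹ (-(h⁻¹ * z)) (h⁻¹ * z) h⁻¹)ᵀ *
        Matrix.fromBlocks h⁻¹ (-(h⁻¹ * z)) (h⁻¹ * z) h⁻¹ = 1 :=
  stmt15_general n z hz
end

section
/- Let n ≥ 1, let g = [[a, b], [c, d]] ∈ Sp_{2n}(ℝ) (a, b, c, d real n×n matrices), and let z be a real symmetric n×n matrix such that d − c·z is invertible. Then w := (a·z − b)·(d − c·z)⁻¹ is a symmetric matrix, and a + w·c = ᵗ(d − c·z)⁻¹. In particular the fractional linear action g ⋄ z := −(a·z − b)·(c·z − d)⁻¹ of Sp_{2n}(ℝ) on symmetric matrices again produces a symmetric matrix whenever c·z − d is invertible. -/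
open Matrix

theorem stmt16 (n : ℕ) (hn : 1 ≤ n) (a b c d : Matrix (Fin n) (Fin n) ℝ)
    (hg : Matrix.fromBlocks a b c d ∈ SpSet n)
    (z : Matrix (Fin n) (Fin n) ℝ) (hz : z.IsSymm) (hu : IsUnit (d - c * z)) :
    ((a * z - b) * (d - c * z)⁻¹).IsSymm ∧
    a + (a * z - b) * (d - c * z)⁻¹ * c = ((d - c * z)⁻¹)ᵀ ∧
    ((-(a * z - b)) * (c * z - d)⁻¹).IsSymm := by
  -- extract block relations from the symplectic condition
  have hg' : Matrix.fromBlocks (cᵀ * a - aᵀ * c) (cᵀ * b - aᵀ * d)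
      (dᵀ * a - bᵀ * c) (dᵀ * b - bᵀ * d) =
      Matrix.fromBlocks (0 : Matrix (Fin n) (Fin n) ℝ) (-1) 1 0 := by
    have h := hg
    simp only [SpSet, JJ, Set.mem_setOf_eq, Matrix.fromBlocks_transpose,
      Matrix.fromBlocks_multiply] at h
    rw [← h]
    congr 1 <;> try congr 1
    all_goals noncomm_ring
  obtain ⟨h11, h12, h21, h22⟩ := Matrix.fromBlocks_inj.mp hg'
  have h1 : cᵀ * a = aᵀ * c := sub_eq_zero.mp h11
  have h2 : aᵀ * d - cᵀ * b = 1 := by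
    have : cᵀ * b - aᵀ * d = -1 := h12
    linear_combination (norm := noncomm_ring) -this
  have h3 : dᵀ * a - bᵀ * c = 1 := h21
  have h4 : dᵀ * b = bᵀ * d := sub_eq_zero.mp h22
  have hzz : zᵀ = z := hz
  set M := d - c * z with hM
  set X := a * z - b with hX
  have hdet : IsUnit M.det := (Matrix.isUnit_iff_isUnit_det M).mp hu
  have hdetT : IsUnit Mᵀ.det := by rwa [Matrix.det_transpose]
  have hMinv : M * M⁻¹ = 1 := Matrix.mul_nonsing_inv M hdet
  have hMTinv : Mᵀ⁻¹ * Mᵀ = 1 := Matrix.nonsing_inv_mul Mᵀ hdetT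
  -- key identity : Mᵀ X = Xᵀ M
  have key : Mᵀ * X = Xᵀ * M := by
    have expand : Mᵀ * X - Xᵀ * M =
        (dᵀ * a - bᵀ * c - 1) * z - z * (aᵀ * d - cᵀ * b - 1)
          - z * (cᵀ * a - aᵀ * c) * z - (dᵀ * b - bᵀ * d) := by
      simp only [hM, hX, Matrix.transpose_sub, Matrix.transpose_mul, hzz]
      noncomm_ring
    rw [h2, h3, h1, h4] at expand
    simp only [sub_self, sub_zero, zero_sub, mul_zero, zero_mul, neg_zero] at expand
    exact sub_eq_zero.mp expand
  -- symmetry of X * M⁻¹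
  have hsymm : (X * M⁻¹).IsSymm := by
    have step : Mᵀ⁻¹ * (Mᵀ * X) * M⁻¹ = Mᵀ⁻¹ * (Xᵀ * M) * M⁻¹ := by rw [key]
    have lhs : Mᵀ⁻¹ * (Mᵀ * X) * M⁻¹ = X * M⁻¹ := by
      rw [← mul_assoc, hMTinv, one_mul]
    have rhs : Mᵀ⁻¹ * (Xᵀ * M) * M⁻¹ = Mᵀ⁻¹ * Xᵀ := by
      rw [mul_assoc, mul_assoc, hMinv, mul_one]
    show (X * M⁻¹)ᵀ = X * M⁻¹
    rw [Matrix.transpose_mul, Matrix.transpose_nonsing_inv, ← rhs, ← step, lhs]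
  refine ⟨hsymm, ?_, ?_⟩
  · -- a + X M⁻¹ c = (M⁻¹)ᵀ
    have h5 : Mᵀ * a + Xᵀ * c = 1 := by
      have expand : Mᵀ * a + Xᵀ * c =
          (dᵀ * a - bᵀ * c) - z * (cᵀ * a - aᵀ * c) := by
        simp only [hM, hX, Matrix.transpose_sub, Matrix.transpose_mul, hzz]
        noncomm_ring
      rw [h1, h3, sub_self, mul_zero, sub_zero] at expand
      exact expand
    have h6 : Mᵀ * (a + X * M⁻¹ * c) = 1 := by
      have : Mᵀ * (X * M⁻¹ * c) = Xᵀ * c := by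
        calc Mᵀ * (X * M⁻¹ * c) = (Mᵀ * X) * M⁻¹ * c := by noncomm_ring
          _ = (Xᵀ * M) * M⁻¹ * c := by rw [key]
          _ = Xᵀ * (M * M⁻¹) * c := by noncomm_ring
          _ = Xᵀ * c := by rw [hMinv, mul_one]
      rw [mul_add, this, h5]
    calc a + X * M⁻¹ * c = Mᵀ⁻¹ * (Mᵀ * (a + X * M⁻¹ * c)) := by
          rw [← mul_assoc, hMTinv, one_mul]
      _ = Mᵀ⁻¹ := by rw [h6, mul_one]
      _ = (M⁻¹)ᵀ := (Matrix.transpose_nonsing_inv M).symm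
  · -- third statement
    have hneg : (c * z - d)⁻¹ = -M⁻¹ := by
      have hcz : c * z - d = -M := by rw [hM]; noncomm_ring
      rw [hcz]
      refine Matrix.inv_eq_right_inv ?_
      rw [neg_mul_neg, hMinv]
    rw [hneg, neg_mul_neg]
    exact hsymm
end
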